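/- In atomic second-order propositional logic extended with primitive disjunction (NI²∨_at, where ∀E is restricted to atomic witnesses), the Russell-Prawitz translation of a disjunction of two distinct variables does not derive the disjunction: ∀X.(Y⊃X)⊃(Z⊃X)⊃X ⊬ Y∨Z. -/
import Mathlib


/-- Formulas of second-order propositional logic with primitive disjunction:
variables, ⊃, ∨, ∀. -/
inductive Fm : Type
  | var : ℕ → Fm
  | imp : Fm → Fm → Fm
  | or  : Fm → Fm → Fm
  | all : ℕ → Fm → Fm
deriving DecidableEq

namespace Fm

/-- `Free X A`: the variable `X` occurs free in `A`. -/
def Free (X : ℕ) : Fm → Prop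
  | var Y => X = Y
  | imp A B => Free X A ∨ Free X B
  | or A B => Free X A ∨ Free X B
  | all Y A => X ≠ Y ∧ Free X A

/-- Substitution of `C` for the free occurrences of `X`. -/
def subst (X : ℕ) (C : Fm) : Fm → Fm
  | var Y => if X = Y then C else var Y
  | imp A B => imp (subst X C A) (subst X C B)
  | or A B => or (subst X C A) (subst X C B)
  | all Y A => if X = Y then all Y A else all Y (subst X C A)

/-- `C` is substitutable (free) for `X` in the given formula (no capture). -/
def FreeFor (C : Fm) (X : ℕ) : Fm → Prop
  | var _ => True
  | imp A B => FreeFor C X A ∧ FreeFor C X B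
  | or A B => FreeFor C X A ∧ FreeFor C X B
  | all Y A => (¬ Free X (all Y A)) ∨ (¬ Free Y C ∧ FreeFor C X A)

end Fm

/-- Natural deduction for second-order propositional logic with primitive
disjunction (the system `NI²∨`).  When `atomic = true` the witness of
∀-elimination must be a variable: this is the system `NI²∨_at`. -/
inductive Deriv (atomic : Bool) : Set Fm → Fm → Prop
  | ax {Γ A} : A ∈ Γ → Deriv atomic Γ A
  | impI {Γ A B} : Deriv atomic (insert A Γ) B → Deriv atomic Γ (.imp A B)
  | impE {Γ A B} : Deriv atomic Γ (.imp A B) → Deriv atomic Γ A → Deriv atomic Γ B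
  | orI1 {Γ A B} : Deriv atomic Γ A → Deriv atomic Γ (.or A B)
  | orI2 {Γ A B} : Deriv atomic Γ B → Deriv atomic Γ (.or A B)
  | orE {Γ A B C} : Deriv atomic Γ (.or A B) →
      Deriv atomic (insert A Γ) C → Deriv atomic (insert B Γ) C →
      Deriv atomic Γ C
  | allI {Γ X A} : Deriv atomic Γ A → (∀ B ∈ Γ, ¬ Fm.Free X B) →
      Deriv atomic Γ (.all X A)
  | allE {Γ X A C} : Deriv atomic Γ (.all X A) → Fm.FreeFor C X A →
      (atomic = true → ∃ Y, C = Fm.var Y) →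
      Deriv atomic Γ (Fm.subst X C A)

namespace RPOr

inductive W : Type
  | bot | a | b
deriving DecidableEq

open W

def le : W → W → Prop := fun w v => w = bot ∨ w = v

lemma le_refl (w : W) : le w w := Or.inr rfl

lemma le_trans {u v w : W} (h1 : le u v) (h2 : le v w) : le u w := by
  rcases h1 with rfl | rfl
  · exact Or.inl rfl
  · exact h2

/-- The domain: upward-closed sets `p` such that `p a ∧ p b → p bot`. -/
def Dom (p : W → Prop) : Prop :=
  (∀ v, p bot → p v) ∧ (p a → p b → p bot)

lemma Dom.mono {p : W → Prop} (hp : Dom p) {w v : W} (h : le w v) (hw : p w) : p v := by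
  rcases h with rfl | rfl
  · exact hp.1 v hw
  · exact hw

def G := ℕ → W → Prop

def Good (g : G) : Prop := ∀ n, Dom (g n)

def upd (g : G) (X : ℕ) (p : W → Prop) : G := fun n => if n = X then p else g n

lemma upd_good {g : G} (hg : Good g) {X p} (hp : Dom p) : Good (upd g X p) := by
  intro n
  unfold upd
  split
  · exact hp
  · exact hg n

lemma upd_upd_same (g : G) (X : ℕ) (p q : W → Prop) :
    upd (upd g X p) X q = upd g X q := by
  funext n; unfold upd; split <;> rfl

lemma upd_comm (g : G) {X Y : ℕ} (h : X ≠ Y) (p q : W → Prop) :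
    upd (upd g X p) Y q = upd (upd g Y q) X p := by
  funext n; unfold upd
  rcases eq_or_ne n Y with rfl | hnY
  · simp [h.symm]
  · simp [hnY]

/-- Kripke forcing. -/
def force (g : G) : Fm → W → Prop
  | .var n, w => g n w
  | .imp A B, w => ∀ v, le w v → force g A v → force g B v
  | .or A B, w => force g A w ∨ force g B w
  | .all X A, w => ∀ v, le w v → ∀ p, Dom p → force (upd g X p) A v

lemma force_mono {A : Fm} : ∀ {g : G}, Good g → ∀ {w v : W}, le w v →
    force g A w → force g A v := by
  induction A with
  | var n => intro g hg w v h hw; exact (hg n).mono h hw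
  | imp A B ihA ihB =>
      intro g hg w v h hw
      intro u hu hA
      exact hw u (le_trans h hu) hA
  | or A B ihA ihB =>
      intro g hg w v h hw
      rcases hw with h1 | h1
      · exact Or.inl (ihA hg h h1)
      · exact Or.inr (ihB hg h h1)
  | all X A ih =>
      intro g hg w v h hw
      intro u hu p hp
      exact hw u (le_trans h hu) p hp

/-- Forcing only depends on the free variables. -/
lemma force_agree {A : Fm} : ∀ {g g' : G},
    (∀ n, Fm.Free n A → g n = g' n) → ∀ {w : W}, (force g A w ↔ force g' A w) := by
  induction A with
  | var n =>
      intro g g' h w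
      show g n w ↔ g' n w
      rw [h n rfl]
  | imp A B ihA ihB =>
      intro g g' h w
      constructor <;> intro hf v hv hA
      · exact (ihB (fun n hn => h n (Or.inr hn))).1
          (hf v hv ((ihA (fun n hn => h n (Or.inl hn))).2 hA))
      · exact (ihB (fun n hn => h n (Or.inr hn))).2
          (hf v hv ((ihA (fun n hn => h n (Or.inl hn))).1 hA))
  | or A B ihA ihB =>
      intro g g' h w
      exact or_congr (ihA (fun n hn => h n (Or.inl hn)))
        (ihB (fun n hn => h n (Or.inr hn)))
  | all X A ih =>
      intro g g' h w
      have key : ∀ p, ∀ n, Fm.Free n A → upd g X p n = upd g' X p n := by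
        intro p n hn
        unfold upd
        split
        · rfl
        · next hne => exact h n ⟨hne, hn⟩
      constructor <;> intro hf v hv p hp
      · exact (ih (key p)).1 (hf v hv p hp)
      · exact (ih (key p)).2 (hf v hv p hp)

lemma subst_not_free {X : ℕ} {C : Fm} : ∀ {A : Fm}, ¬ Fm.Free X A →
    Fm.subst X C A = A := by
  intro A
  induction A with
  | var n =>
      intro h
      simp only [Fm.Free] at h
      simp only [Fm.subst, if_neg h]
  | imp A B ihA ihB =>
      intro h
      simp only [Fm.Free] at h
      push_neg at h
      simp only [Fm.subst]
      rw [ihA h.1, ihB h.2]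
  | or A B ihA ihB =>
      intro h
      simp only [Fm.Free] at h
      push_neg at h
      simp only [Fm.subst]
      rw [ihA h.1, ihB h.2]
  | all Y A ih =>
      intro h
      simp only [Fm.Free] at h
      push_neg at h
      simp only [Fm.subst]
      rcases eq_or_ne X Y with rfl | hne
      · simp
      · rw [if_neg hne, ih (h hne)]

lemma force_subst_var {X m : ℕ} : ∀ {A : Fm}, Fm.FreeFor (.var m) X A →
    ∀ {g : G} {w : W},
      (force g (Fm.subst X (.var m) A) w ↔ force (upd g X (g m)) A w) := by
  intro A
  induction A with
  | var n =>
      intro _ g w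
      unfold Fm.subst force upd
      rcases eq_or_ne X n with rfl | hne
      · simp [force]
      · simp [if_neg hne, force, (Ne.symm hne)]
  | imp A B ihA ihB =>
      intro hff g w
      constructor <;> intro hf v hv hA
      · exact (ihB hff.2).1 (hf v hv ((ihA hff.1).2 hA))
      · exact (ihB hff.2).2 (hf v hv ((ihA hff.1).1 hA))
  | or A B ihA ihB =>
      intro hff g w
      exact or_congr (ihA hff.1) (ihB hff.2)
  | all Y A ih =>
      intro hff g w
      rcases eq_or_ne X Y with rfl | hne
      · -- substitution does nothing
        unfold Fm.subst
        rw [if_pos rfl]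
        constructor <;> intro hf v hv p hp
        · have h1 := hf v hv p hp
          rw [upd_upd_same]
          exact h1
        · have h1 := hf v hv p hp
          rw [upd_upd_same] at h1
          exact h1
      · rcases hff with hnf | ⟨hnY, hff⟩
        · -- X not free in all Y A, hence not free in A
          have hnfA : ¬ Fm.Free X A := fun h => hnf ⟨hne, h⟩
          rw [show Fm.subst X (.var m) (.all Y A) = .all Y A from
            subst_not_free (by exact hnf)]
          exact force_agree (g' := upd g X (g m)) (fun n hn => by
            unfold upd
            split
            · next h => exact absurd (h ▸ hn) (by exact fun hh => hnf hh)
            · rfl)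
        · -- Y ≠ m, FreeFor in A
          have hYm : Y ≠ m := fun h => hnY (h ▸ rfl)
          unfold Fm.subst
          rw [if_neg hne]
          constructor <;> intro hf v hv p hp
          · have h1 := (ih hff).1 (hf v hv p hp)
            have h2 : upd g Y p m = g m := by
              unfold upd; rw [if_neg (Ne.symm hYm)]
            rw [h2] at h1
            rwa [upd_comm _ (Ne.symm hne)] at h1
          · have h1 := hf v hv p hp
            rw [← upd_comm _ (Ne.symm hne)] at h1
            apply (ih hff).2
            have h2 : upd g Y p m = g m := by
              unfold upd; rw [if_neg (Ne.symm hYm)]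
            rwa [h2]

/-- Soundness of `NI²∨_at` for this model. -/
lemma sound {Γ : Set Fm} {A : Fm} (h : Deriv true Γ A) :
    ∀ (g : G) (w : W), Good g → (∀ B ∈ Γ, force g B w) → force g A w := by
  induction h with
  | ax hA => intro g w hg hΓ; exact hΓ _ hA
  | impI h ih =>
      intro g w hg hΓ
      intro v hv hA
      exact ih g v hg (fun B hB => by
        rcases hB with rfl | hB
        · exact hA
        · exact force_mono hg hv (hΓ B hB))
  | impE h1 h2 ih1 ih2 =>
      intro g w hg hΓ
      exact ih1 g w hg hΓ w (le_refl w) (ih2 g w hg hΓ)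
  | orI1 h ih => intro g w hg hΓ; exact Or.inl (ih g w hg hΓ)
  | orI2 h ih => intro g w hg hΓ; exact Or.inr (ih g w hg hΓ)
  | orE h h1 h2 ih ih1 ih2 =>
      intro g w hg hΓ
      rcases ih g w hg hΓ with hA | hB
      · exact ih1 g w hg (fun B hB => by
          rcases hB with rfl | hB
          · exact hA
          · exact hΓ B hB)
      · exact ih2 g w hg (fun B hB' => by
          rcases hB' with rfl | hB'
          · exact hB
          · exact hΓ B hB')
  | allI h hfree ih =>
      intro g w hg hΓ
      intro v hv p hp
      apply ih (RPOr.upd g _ p) v (upd_good hg hp)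
      intro B hB
      have := force_mono hg hv (hΓ B hB)
      exact (force_agree (fun n hn => by
        unfold upd
        split
        · next he => exact absurd (he ▸ hn) (hfree B hB)
        · rfl)).1 this
  | allE h hff hat ih =>
      intro g w hg hΓ
      obtain ⟨m, rfl⟩ := hat rfl
      apply (force_subst_var hff).2
      exact ih g w hg hΓ w (le_refl w) (g m) (hg m)

end RPOr

/-- In `NI²∨_at` (atomic ∀E, primitive disjunction), the Russell-Prawitz
translation of a disjunction of two distinct variables does not derive the
disjunction:  `∀X.(Y⊃X)⊃(Z⊃X)⊃X ⊬ Y∨Z`. -/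
theorem rp_or_does_not_derive_or (X Y Z : ℕ)
    (hXY : X ≠ Y) (hXZ : X ≠ Z) (hYZ : Y ≠ Z) :
    ¬ Deriv true
        {Fm.all X (.imp (.imp (.var Y) (.var X))
            (.imp (.imp (.var Z) (.var X)) (.var X)))}
        (.or (.var Y) (.var Z)) := by
  intro hd
  classical
  -- the countermodel
  set Pa : RPOr.W → Prop := fun w => w = RPOr.W.a with hPa
  set Pb : RPOr.W → Prop := fun w => w = RPOr.W.b with hPb
  set g0 : RPOr.G := fun n => if n = Y then Pa else if n = Z then Pb else fun _ => False
    with hg0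
  have hDa : RPOr.Dom Pa := by
    constructor
    · intro v h; simp [hPa] at h
    · intro h1 h2; simp [hPa] at h2
  have hDb : RPOr.Dom Pb := by
    constructor
    · intro v h; simp [hPb] at h
    · intro h1 h2; simp [hPb] at h1
  have hDf : RPOr.Dom (fun _ : RPOr.W => False) := ⟨fun v h => h, fun h _ => h⟩
  have hgood : RPOr.Good g0 := by
    intro n
    simp only [hg0]
    split
    · exact hDa
    · split
      · exact hDb
      · exact hDf
  have hg0Y : g0 Y = Pa := by simp [hg0]
  have hg0Z : g0 Z = Pb := by simp [hg0, hYZ.symm]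
  -- the hypothesis is forced at bot
  have hhyp : RPOr.force g0
      (Fm.all X (.imp (.imp (.var Y) (.var X))
          (.imp (.imp (.var Z) (.var X)) (.var X)))) RPOr.W.bot := by
    intro v hv p hp
    intro v1 hv1 hYp v2 hv2 hZp
    have hY : RPOr.upd g0 X p Y = Pa := by
      unfold RPOr.upd; rw [if_neg hXY.symm, hg0Y]
    have hZ : RPOr.upd g0 X p Z = Pb := by
      unfold RPOr.upd; rw [if_neg hXZ.symm, hg0Z]
    have hX : RPOr.upd g0 X p X = p := by
      unfold RPOr.upd; rw [if_pos rfl]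
    -- unfold forcing of implications
    have hYp' : ∀ u, RPOr.le v1 u → u = RPOr.W.a → p u := by
      intro u hu ha
      have h2 : RPOr.upd g0 X p X u :=
        hYp u hu (show RPOr.upd g0 X p Y u by rw [hY]; exact ha)
      rwa [hX] at h2
    have hZp' : ∀ u, RPOr.le v2 u → u = RPOr.W.b → p u := by
      intro u hu hb
      have h2 : RPOr.upd g0 X p X u :=
        hZp u hu (show RPOr.upd g0 X p Z u by rw [hZ]; exact hb)
      rwa [hX] at h2
    show RPOr.upd g0 X p X v2
    rw [hX]
    cases v2 with
    | a => exact hYp' _ (RPOr.le_trans hv2 (RPOr.le_refl _)) rfl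
    | b => exact hZp' _ (RPOr.le_refl _) rfl
    | bot =>
        have hv1b : v1 = RPOr.W.bot := by
          rcases hv2 with h | h
          · exact h
          · exact h.symm ▸ rfl
        subst hv1b
        have pa : p RPOr.W.a := hYp' _ (Or.inl rfl) rfl
        have pb : p RPOr.W.b := hZp' _ (Or.inl rfl) rfl
        exact hp.2 pa pb
  have hforce := RPOr.sound hd g0 RPOr.W.bot hgood (by
    intro B hB
    rcases hB with rfl
    exact hhyp)
  rcases hforce with h | h
  · have : g0 Y RPOr.W.bot := h
    rw [hg0Y] at this
    simp [hPa] at this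
  · have : g0 Z RPOr.W.bot := h
    rw [hg0Z] at this
    simp [hPb] at this
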